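/- arXiv:1901.06498 — 2 statements merged into one kernel-verified Lean document; each statement's English description precedes it below -/
import Mathlib

section
/- Stability estimate for truncated SVD: if α > 0, δ > 0, x ∈ ℝ^N and y ∈ ℝ^M satisfy ‖A x − y‖ ≤ δ, then ‖B_α y − A⁺(A x)‖ ≤ δ / √α + ‖(A⁺ − B_α)(A x)‖. -/
open RealInnerProductSpace Finset

theorem tsvd_stability_estimate {N M r : ℕ}
    (A : EuclideanSpace ℝ (Fin N) →ₗ[ℝ] EuclideanSpace ℝ (Fin M))
    (σ : Fin r → ℝ) (hσ : ∀ i, 0 < σ i)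
    (u : Fin r → EuclideanSpace ℝ (Fin N)) (hu : Orthonormal ℝ u)
    (v : Fin r → EuclideanSpace ℝ (Fin M)) (hv : Orthonormal ℝ v)
    (hA : ∀ x, A x = ∑ i, (σ i * ⟪u i, x⟫) • v i)
    (Ap : EuclideanSpace ℝ (Fin M) → EuclideanSpace ℝ (Fin N))
    (hAp : ∀ y, Ap y = ∑ i, ((σ i)⁻¹ * ⟪v i, y⟫) • u i)
    (B : ℝ → EuclideanSpace ℝ (Fin M) → EuclideanSpace ℝ (Fin N))
    (hB : ∀ α y, B α y = ∑ i ∈ univ.filter (fun i => α ≤ σ i ^ 2),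
      ((σ i)⁻¹ * ⟪v i, y⟫) • u i)
    (α : ℝ) (hα : 0 < α) (δ : ℝ) (hδ : 0 < δ)
    (x : EuclideanSpace ℝ (Fin N)) (y : EuclideanSpace ℝ (Fin M))
    (hxy : ‖A x - y‖ ≤ δ) :
    ‖B α y - Ap (A x)‖ ≤ δ / Real.sqrt α + ‖Ap (A x) - B α (A x)‖ := by
  set s := univ.filter (fun i => α ≤ σ i ^ 2) with hs
  -- linearity of B α in its argument
  have hBsub : ∀ z w, B α z - B α w = B α (z - w) := by
    intro z w
    simp_rw [hB, ← Finset.sum_sub_distrib, ← sub_smul, inner_sub_right, mul_sub]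
  -- bound on B α
  have hBnorm : ∀ z, ‖B α z‖ ≤ ‖z‖ / Real.sqrt α := by
    intro z
    have hsq : ‖B α z‖ ^ 2 ≤ ‖z‖ ^ 2 / α := by
      have h1 : ‖B α z‖ ^ 2 = ∑ i ∈ s, ((σ i)⁻¹ * ⟪v i, z⟫) ^ 2 := by
        rw [hB, ← hs, ← real_inner_self_eq_norm_sq, hu.inner_sum]
        exact Finset.sum_congr rfl fun i _ => by simp [sq]
      rw [h1]
      have h2 : ∑ i ∈ s, ((σ i)⁻¹ * ⟪v i, z⟫) ^ 2 ≤ ∑ i ∈ s, α⁻¹ * ⟪v i, z⟫ ^ 2 := by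
        apply Finset.sum_le_sum
        intro i hi
        have hiα : α ≤ σ i ^ 2 := by
          have := hi
          rw [hs, Finset.mem_filter] at this
          exact this.2
        have h3 : ((σ i)⁻¹) ^ 2 ≤ α⁻¹ := by
          rw [inv_pow]
          exact inv_anti₀ hα hiα
        rw [mul_pow]
        exact mul_le_mul_of_nonneg_right h3 (sq_nonneg _)
      refine h2.trans ?_
      rw [← Finset.mul_sum, div_eq_inv_mul]
      refine mul_le_mul_of_nonneg_left ?_ (by positivity)
      have h4 := hv.sum_inner_products_le (s := s) z
      simpa using h4
    have hnn : (0:ℝ) ≤ ‖z‖ / Real.sqrt α := by positivity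
    have heq : ‖z‖ ^ 2 / α = (‖z‖ / Real.sqrt α) ^ 2 := by
      rw [div_pow, Real.sq_sqrt hα.le]
    rw [heq] at hsq
    calc ‖B α z‖ = Real.sqrt (‖B α z‖ ^ 2) := (Real.sqrt_sq (norm_nonneg _)).symm
      _ ≤ Real.sqrt ((‖z‖ / Real.sqrt α) ^ 2) := Real.sqrt_le_sqrt hsq
      _ = ‖z‖ / Real.sqrt α := Real.sqrt_sq hnn
  have key : B α y - Ap (A x) = B α (y - A x) + (B α (A x) - Ap (A x)) := by
    rw [← hBsub]; abel
  calc ‖B α y - Ap (A x)‖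
      ≤ ‖B α (y - A x)‖ + ‖B α (A x) - Ap (A x)‖ := by rw [key]; exact norm_add_le _ _
    _ ≤ δ / Real.sqrt α + ‖Ap (A x) - B α (A x)‖ := by
        rw [norm_sub_rev]
        gcongr
        calc ‖B α (y - A x)‖ ≤ ‖y - A x‖ / Real.sqrt α := hBnorm _
          _ ≤ δ / Real.sqrt α := by
              rw [norm_sub_rev] at hxy
              gcongr
end

section
/- Convergence of truncated SVD as a regularization method: let x ∈ ℝ^N, let α : (0,∞) → (0,∞) be a parameter choice with α(δ) → 0 and δ²/α(δ) → 0 as δ → 0, and for each δ > 0 let y_δ ∈ ℝ^M satisfy ‖A x − y_δ‖ ≤ δ. Then B_{α(δ)} y_δ → A⁺(A x) as δ → 0. -/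
open RealInnerProductSpace Finset

theorem tsvd_convergence {N M r : ℕ}
    (A : EuclideanSpace ℝ (Fin N) →ₗ[ℝ] EuclideanSpace ℝ (Fin M))
    (σ : Fin r → ℝ) (hσ : ∀ i, 0 < σ i)
    (u : Fin r → EuclideanSpace ℝ (Fin N)) (hu : Orthonormal ℝ u)
    (v : Fin r → EuclideanSpace ℝ (Fin M)) (hv : Orthonormal ℝ v)
    (hA : ∀ x, A x = ∑ i, (σ i * ⟪u i, x⟫) • v i)
    (Ap : EuclideanSpace ℝ (Fin M) → EuclideanSpace ℝ (Fin N))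
    (hAp : ∀ y, Ap y = ∑ i, ((σ i)⁻¹ * ⟪v i, y⟫) • u i)
    (B : ℝ → EuclideanSpace ℝ (Fin M) → EuclideanSpace ℝ (Fin N))
    (hB : ∀ α y, B α y = ∑ i ∈ univ.filter (fun i => α ≤ σ i ^ 2),
      ((σ i)⁻¹ * ⟪v i, y⟫) • u i)
    (x : EuclideanSpace ℝ (Fin N))
    (a : ℝ → ℝ) (ha : ∀ δ > 0, 0 < a δ)
    (ha0 : Filter.Tendsto a (nhdsWithin 0 (Set.Ioi 0)) (nhds 0))
    (hda : Filter.Tendsto (fun δ => δ ^ 2 / a δ) (nhdsWithin 0 (Set.Ioi 0)) (nhds 0))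
    (y : ℝ → EuclideanSpace ℝ (Fin M)) (hy : ∀ δ > 0, ‖A x - y δ‖ ≤ δ) :
    Filter.Tendsto (fun δ => B (a δ) (y δ)) (nhdsWithin 0 (Set.Ioi 0))
      (nhds (Ap (A x))) := by
  -- there is ε > 0 below all σ i ^ 2
  obtain ⟨ε, hε, hεσ⟩ : ∃ ε > 0, ∀ i, ε ≤ σ i ^ 2 := by
    rcases isEmpty_or_nonempty (Fin r) with h | h
    · exact ⟨1, one_pos, fun i => h.elim i⟩
    · obtain ⟨j, hj⟩ := Finite.exists_min (fun i => σ i ^ 2)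
      exact ⟨σ j ^ 2, pow_pos (hσ j) 2, hj⟩
  -- eventually B (a δ) = Ap
  have hev : ∀ᶠ δ in nhdsWithin 0 (Set.Ioi 0), B (a δ) (y δ) = Ap (y δ) := by
    filter_upwards [ha0.eventually (eventually_lt_nhds hε)] with δ hδ
    rw [hB, hAp]
    congr 1
    apply Finset.filter_true_of_mem
    intro i _
    exact le_of_lt (lt_of_lt_of_le hδ (hεσ i))
  rw [Filter.tendsto_congr' hev, tendsto_iff_norm_sub_tendsto_zero]
  set C : ℝ := ∑ i, (σ i)⁻¹ with hC
  have key : ∀ δ > 0, ‖Ap (y δ) - Ap (A x)‖ ≤ C * δ := by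
    intro δ hδ
    have : Ap (y δ) - Ap (A x) = ∑ i, ((σ i)⁻¹ * ⟪v i, y δ - A x⟫) • u i := by
      rw [hAp, hAp, ← Finset.sum_sub_distrib]
      congr 1; ext i
      rw [← sub_smul, inner_sub_right]; ring_nf
    rw [this]
    calc ‖∑ i, ((σ i)⁻¹ * ⟪v i, y δ - A x⟫) • u i‖
        ≤ ∑ i, ‖((σ i)⁻¹ * ⟪v i, y δ - A x⟫) • u i‖ := norm_sum_le _ _
      _ ≤ ∑ i, (σ i)⁻¹ * δ := by
          apply Finset.sum_le_sum
          intro i _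
          rw [norm_smul, hu.1 i, mul_one, Real.norm_eq_abs, abs_mul,
            abs_of_pos (inv_pos.mpr (hσ i))]
          apply mul_le_mul_of_nonneg_left _ (le_of_lt (inv_pos.mpr (hσ i)))
          calc |⟪v i, y δ - A x⟫| ≤ ‖v i‖ * ‖y δ - A x‖ := abs_real_inner_le_norm _ _
            _ = ‖A x - y δ‖ := by rw [hv.1 i, one_mul, norm_sub_rev]
            _ ≤ δ := hy δ hδ
      _ = C * δ := by rw [← Finset.sum_mul]
  have hCδ : Filter.Tendsto (fun δ => C * δ) (nhdsWithin 0 (Set.Ioi 0)) (nhds 0) := by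
    have h1 : Filter.Tendsto (fun δ : ℝ => C * δ) (nhds 0) (nhds (C * 0)) :=
      (continuous_const.mul continuous_id).tendsto 0
    simpa using h1.mono_left nhdsWithin_le_nhds
  apply squeeze_zero' _ _ hCδ
  · filter_upwards with δ using norm_nonneg _
  · filter_upwards [self_mem_nhdsWithin] with δ hδ using key δ hδ
end
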